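/- For every α ∈ (1/4, 1/2] there exist δ = δ(α) > 0 and n₀ = n₀(α) ∈ ℕ such that for all n ≥ n₀: every graphical degree sequence k* = (k_i*)_{i=1}^n satisfying (n−1)α ≤ k_i* ≤ (n−1)(1−α) for all 1 ≤ i ≤ n is δ-tame, i.e., its canonical probabilities satisfy δ ≤ p_ij* ≤ 1−δ for all 1 ≤ i ≠ j ≤ n. -/

import Mathlib

open Filter Finset Asymptotics

/-- A simple undirected graph on `n` labelled vertices, given by its adjacency
indicators `g i j ∈ {0,1}` (as `Bool`), symmetric and with no loops. -/
abbrev LabGraph (n : ℕ) : Type :=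
  {g : Fin n → Fin n → Bool // (∀ i j, g i j = g j i) ∧ ∀ i, g i i = false}

noncomputable section

/-- The degree `k_i(G) = Σ_{j ≠ i} g_ij(G)` of vertex `i` in the graph `G`. -/
def degSeq {n : ℕ} (G : LabGraph n) (i : Fin n) : ℕ :=
  ∑ j ∈ Finset.univ.filter (fun j => j ≠ i), if G.1 i j then 1 else 0

/-- Canonical connection probabilities `p*_ij = x_i x_j / (1 + x_i x_j)`. -/
def pStar {n : ℕ} (x : Fin n → ℝ) (i j : Fin n) : ℝ := x i * x j / (1 + x i * x j)

/-- The parameters `x` realise the degree sequence `k` as canonical averages: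
`Σ_{j ≠ i} p*_ij = k_i` for all `i`. -/
def fitsDegrees {n : ℕ} (x : Fin n → ℝ) (k : Fin n → ℕ) : Prop :=
  ∀ i, ∑ j ∈ Finset.univ.filter (fun j => j ≠ i), pStar x i j = (k i : ℝ)

/-- Canonical ensemble probability
`P_can(G) = Π_{i<j} p_ij^{g_ij(G)} (1-p_ij)^{1-g_ij(G)}`. -/
def Pcan {n : ℕ} (p : Fin n → Fin n → ℝ) (G : LabGraph n) : ℝ :=
  ∏ ij ∈ Finset.univ.filter (fun ij : Fin n × Fin n => ij.1 < ij.2),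
    if G.1 ij.1 ij.2 then p ij.1 ij.2 else 1 - p ij.1 ij.2

/-- `Ω_k`: the number of graphs with degree sequence `k`. -/
def numGraphs (n : ℕ) (k : Fin n → ℕ) : ℕ :=
  (Finset.univ.filter (fun G : LabGraph n => degSeq G = k)).card

/-- Microcanonical ensemble: uniform on the graphs with degree sequence `k`. -/
def Pmic {n : ℕ} (k : Fin n → ℕ) (G : LabGraph n) : ℝ :=
  if degSeq G = k then ((numGraphs n k : ℝ))⁻¹ else 0

/-- Relative entropy `S_n(P_mic | P_can) = Σ_G P_mic(G) log (P_mic(G)/P_can(G))`. -/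
def relEnt (n : ℕ) (k : Fin n → ℕ) (p : Fin n → Fin n → ℝ) : ℝ :=
  ∑ G : LabGraph n, Pmic k G * Real.log (Pmic k G / Pcan p G)

/-- `f̄_n = (1/(2n)) Σ_{i=1}^n log (k_i (n-1-k_i) / n)`. -/
def fbar (n : ℕ) (k : Fin n → ℕ) : ℝ :=
  (1 / (2 * (n : ℝ))) * ∑ i, Real.log ((k i : ℝ) * ((n : ℝ) - 1 - (k i : ℝ)) / (n : ℝ))

/-- The canonical covariance matrix `Q` of the degrees:
`q_ij = p_ij (1 - p_ij)` for `i ≠ j` and `q_ii = Σ_{l ≠ i} p_il (1 - p_il)`. -/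
def Qmat {n : ℕ} (p : Fin n → Fin n → ℝ) : Matrix (Fin n) (Fin n) ℝ :=
  Matrix.of fun i j =>
    if i = j then ∑ l ∈ Finset.univ.filter (fun l => l ≠ i), p i l * (1 - p i l)
    else p i j * (1 - p i j)

/-- δ-tameness: `δ ≤ p_ij ≤ 1 - δ` for all `i ≠ j`. -/
def deltaTame {n : ℕ} (δ : ℝ) (p : Fin n → Fin n → ℝ) : Prop :=
  ∀ i j : Fin n, i ≠ j → δ ≤ p i j ∧ p i j ≤ 1 - δ


/-! Let `x` be maximal at `a` and minimal at `b`, and `P = p*_ab`. Every entry of row `b` is at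
most `P` and every entry of row `a` at least `P`, so the degree bounds give `α ≤ P ≤ 1 - α`, which
pins down `x_a x_b`. If `x_a / x_b` were huge, each vertex `j` would satisfy `p*_aj ≥ 1 - η` or
`p*_bj ≤ η`, where `η = (α - 1/4) / 2`; summing the excesses `p*_aj - P` and `P - p*_bj` over `j`
against the degree bounds of `a` and `b` then forces `n (α - 1/4 - η) = O(1)`, impossible for
`α > 1/4` and `n` large. So `x_a / x_b` is bounded, all products `x_i x_j` lie in a fixed compact
subinterval of `(0, ∞)`, and the probabilities `x_i x_j / (1 + x_i x_j)` stay away from `0` and `1`.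
-/

section Odds

variable {c y z : ℝ}

lemma div_one_add_le_div_one_add (hy : 0 ≤ y) (hyz : y ≤ z) : y / (1 + y) ≤ z / (1 + z) := by
  rw [div_le_div_iff₀ (by linarith) (by linarith)]
  nlinarith

lemma le_div_one_add_iff (hc : c < 1) (hy : 0 ≤ y) : c ≤ y / (1 + y) ↔ c / (1 - c) ≤ y := by
  rw [le_div_iff₀ (by linarith), div_le_iff₀ (by linarith)]
  constructor <;> intro h <;> nlinarith

lemma div_one_add_le_iff (hc : c < 1) (hy : 0 ≤ y) : y / (1 + y) ≤ c ↔ y ≤ c / (1 - c) := by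
  rw [div_le_iff₀ (by linarith), le_div_iff₀ (by linarith)]
  constructor <;> intro h <;> nlinarith

end Odds

lemma card_mul_le_of_forall_le_or_le {ι : Type*} (s : Finset ι) {u v : ι → ℝ} {A B : ℝ}
    (hA : 0 ≤ A) (hB : 0 ≤ B) (hu : ∀ j ∈ s, 0 ≤ u j) (hv : ∀ j ∈ s, 0 ≤ v j)
    (h : ∀ j ∈ s, A ≤ u j ∨ B ≤ v j) :
    #s * (A * B) ≤ B * ∑ j ∈ s, u j + A * ∑ j ∈ s, v j := by
  rw [mul_sum, mul_sum, ← sum_add_distrib, ← nsmul_eq_mul, ← sum_const]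
  refine sum_le_sum fun j hj => ?_
  rcases h j hj with h | h
  · nlinarith [hv j hj]
  · nlinarith [hu j hj]

/-- Moving the `N`-terms of `h` to the left leaves the factor
`(P - 1/2)^2 + α - 1/4 - 2αη + η^2` of `N`, and `2αη ≤ η`. -/
lemma mul_le_one_of_row_slack {α η P N : ℝ} (hα : α ≤ 1 / 2) (hη : 0 ≤ η) (hηα : η ≤ α)
    (hαP : α ≤ P) (hP : P ≤ 1 - α) (hN : 0 ≤ N)
    (h : (N + 1) * ((1 - η - P) * (P - η)) ≤
      (P - η) * (N * (1 - α - P) + 1) + (1 - η - P) * (N * (P - α) + 1)) :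
    N * (α - 1 / 4 - η) ≤ 1 := by
  nlinarith [mul_nonneg hN (sq_nonneg (P - 1 / 2)), mul_nonneg hN (sq_nonneg η),
    mul_nonneg (mul_nonneg hN hη) (by linarith : (0 : ℝ) ≤ 1 - 2 * α),
    mul_nonneg (by linarith : (0 : ℝ) ≤ 1 - η - P) (by linarith : (0 : ℝ) ≤ P - η)]

section pStar

variable {n : ℕ} {x : Fin n → ℝ}

lemma pStar_comm (i j : Fin n) : pStar x i j = pStar x j i := by
  simp only [pStar, mul_comm]

lemma pStar_nonneg (hx : ∀ i, 0 ≤ x i) (i j : Fin n) : 0 ≤ pStar x i j := by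
  have := mul_nonneg (hx i) (hx j)
  unfold pStar
  positivity

lemma pStar_le_one (hx : ∀ i, 0 ≤ x i) (i j : Fin n) : pStar x i j ≤ 1 :=
  div_le_one_of_le₀ (by linarith) (by linarith [mul_nonneg (hx i) (hx j)])

lemma pStar_le_pStar (hx : ∀ i, 0 ≤ x i) {i j i' j' : Fin n} (h : x i * x j ≤ x i' * x j') :
    pStar x i j ≤ pStar x i' j' :=
  div_one_add_le_div_one_add (mul_nonneg (hx i) (hx j)) h

lemma card_filter_ne (i : Fin n) : (#(univ.filter fun j => j ≠ i) : ℝ) = n - 1 := by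
  rw [filter_ne', card_erase_of_mem (mem_univ i), card_univ, Fintype.card_fin,
    Nat.cast_pred (Fin.pos i)]

end pStar

namespace fitsDegrees

variable {n : ℕ} {x : Fin n → ℝ} {k : Fin n → ℕ}

lemma sum_univ_pStar (hfit : fitsDegrees x k) (i : Fin n) :
    ∑ j, pStar x i j = k i + pStar x i i := by
  rw [← hfit i, filter_ne', sum_erase_add _ _ (mem_univ i)]

lemma degree_le (hfit : fitsDegrees x k) (hx : ∀ i, 0 ≤ x i) {a : Fin n}
    (ha : ∀ j, x j ≤ x a) (i : Fin n) : (k i : ℝ) ≤ (n - 1) * pStar x i a := by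
  rw [← hfit i, ← card_filter_ne i, ← nsmul_eq_mul, ← sum_const]
  exact sum_le_sum fun j _ => pStar_le_pStar hx (mul_le_mul_of_nonneg_left (ha j) (hx i))

lemma le_degree (hfit : fitsDegrees x k) (hx : ∀ i, 0 ≤ x i) {b : Fin n}
    (hb : ∀ j, x b ≤ x j) (i : Fin n) : (n - 1) * pStar x i b ≤ k i := by
  rw [← hfit i, ← card_filter_ne i, ← nsmul_eq_mul, ← sum_const]
  exact sum_le_sum fun j _ => pStar_le_pStar hx (mul_le_mul_of_nonneg_left (hb j) (hx i))

end fitsDegrees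

section Spread

variable {n : ℕ} {x : Fin n → ℝ} {k : Fin n → ℕ} {α : ℝ} {a b : Fin n}

lemma pStar_max_min_mem_Icc (hfit : fitsDegrees x k) (hx : ∀ i, 0 ≤ x i)
    (ha : ∀ j, x j ≤ x a) (hb : ∀ j, x b ≤ x j)
    (hk : ∀ i, ((n : ℝ) - 1) * α ≤ (k i : ℝ) ∧ (k i : ℝ) ≤ ((n : ℝ) - 1) * (1 - α))
    (hn : 0 < (n : ℝ) - 1) : pStar x a b ∈ Set.Icc α (1 - α) := by
  refine ⟨?_, ?_⟩
  · refine le_of_mul_le_mul_left ((hk b).1.trans ?_) hn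
    rw [pStar_comm]
    exact hfit.degree_le hx ha b
  · exact le_of_mul_le_mul_left ((hfit.le_degree hx hb a).trans (hk a).2) hn

lemma mul_max_min_mem_Icc (hfit : fitsDegrees x k) (hx : ∀ i, 0 ≤ x i)
    (ha : ∀ j, x j ≤ x a) (hb : ∀ j, x b ≤ x j)
    (hk : ∀ i, ((n : ℝ) - 1) * α ≤ (k i : ℝ) ∧ (k i : ℝ) ≤ ((n : ℝ) - 1) * (1 - α))
    (hn : 0 < (n : ℝ) - 1) (hα : 0 < α) :
    x a * x b ∈ Set.Icc ((1 - α) / α)⁻¹ ((1 - α) / α) := by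
  obtain ⟨hαP, hP⟩ := pStar_max_min_mem_Icc hfit hx ha hb hk hn
  have hα1 : α < 1 := by linarith [pStar_le_one hx a b]
  have hab := mul_nonneg (hx a) (hx b)
  rw [pStar, le_div_one_add_iff hα1 hab] at hαP
  rw [pStar, div_one_add_le_iff (by linarith) hab, sub_sub_cancel] at hP
  exact ⟨by rwa [inv_div], hP⟩

lemma one_sub_le_pStar_or_pStar_le {η : ℝ} (hx : ∀ i, 0 ≤ x i) (hα : 0 < α) (hα1 : α < 1)
    (hη : 0 < η) (hη1 : η < 1) (hab : x a * x b ∈ Set.Icc ((1 - α) / α)⁻¹ ((1 - α) / α))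
    (hK : ((1 - α) / α * ((1 - η) / η)) ^ 2 * x b ≤ x a) (j : Fin n) :
    1 - η ≤ pStar x a j ∨ pStar x b j ≤ η := by
  set K := (1 - α) / α * ((1 - η) / η) with hKdef
  have hK0 : 0 < K := by
    have : 0 < 1 - α := by linarith
    have : 0 < 1 - η := by linarith
    positivity
  rcases le_total (K * x b) (x j) with hj | hj
  · left
    rw [pStar, le_div_one_add_iff (by linarith) (mul_nonneg (hx a) (hx j)), sub_sub_cancel]
    calc (1 - η) / η = K * ((1 - α) / α)⁻¹ := by
          rw [hKdef]; field_simp [show 1 - α ≠ 0 by linarith]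
      _ ≤ K * (x a * x b) := by gcongr; exact hab.1
      _ = x a * (K * x b) := by ring
      _ ≤ x a * x j := by gcongr; exact hx a
  · right
    rw [pStar, div_one_add_le_iff hη1 (mul_nonneg (hx b) (hx j))]
    have : K * (x b * x j) ≤ K * (η / (1 - η)) := by
      calc K * (x b * x j) = x b * (K * x j) := by ring
        _ ≤ x b * (K * (K * x b)) := by gcongr; exact hx b
        _ = x b * (K ^ 2 * x b) := by ring
        _ ≤ x b * x a := by gcongr; exact hx b
        _ ≤ (1 - α) / α := by rw [mul_comm]; exact hab.2
        _ = K * (η / (1 - η)) := by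
          rw [hKdef]; field_simp [show 1 - η ≠ 0 by linarith]
    exact le_of_mul_le_mul_left this hK0

lemma max_lt_sq_mul_min {η : ℝ} (hfit : fitsDegrees x k) (hx : ∀ i, 0 ≤ x i)
    (ha : ∀ j, x j ≤ x a) (hb : ∀ j, x b ≤ x j)
    (hk : ∀ i, ((n : ℝ) - 1) * α ≤ (k i : ℝ) ∧ (k i : ℝ) ≤ ((n : ℝ) - 1) * (1 - α))
    (hα : α ≤ 1 / 2) (hη : 0 < η) (hηα : η ≤ α - 1 / 4)
    (hn : 1 < ((n : ℝ) - 1) * (α - 1 / 4 - η)) :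
    x a < ((1 - α) / α * ((1 - η) / η)) ^ 2 * x b := by
  have hN : 0 < (n : ℝ) - 1 := by nlinarith
  obtain ⟨hαP, hP⟩ := pStar_max_min_mem_Icc hfit hx ha hb hk hN
  set P := pStar x a b
  by_contra! hK
  have hsplit := card_mul_le_of_forall_le_or_le univ
    (u := fun j => pStar x a j - P) (v := fun j => P - pStar x b j)
    (A := 1 - η - P) (B := P - η) (by linarith) (by linarith)
    (fun j _ => sub_nonneg.2 <| pStar_le_pStar hx <| mul_le_mul_of_nonneg_left (hb j) (hx a))
    (fun j _ => sub_nonneg.2 <| pStar_le_pStar hx <| by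
      rw [mul_comm (x a)]; exact mul_le_mul_of_nonneg_left (ha j) (hx b))
    (fun j _ => (one_sub_le_pStar_or_pStar_le hx (by linarith) (by linarith) hη (by linarith)
      (mul_max_min_mem_Icc hfit hx ha hb hk hN (by linarith)) hK j).imp
        (fun h => by linarith) (fun h => by linarith))
  have hrow_a : ∑ j, (pStar x a j - P) ≤ ((n : ℝ) - 1) * (1 - α - P) + 1 := by
    rw [sum_sub_distrib, hfit.sum_univ_pStar, sum_const, card_univ, Fintype.card_fin,
      nsmul_eq_mul]
    linarith [(hk a).2, pStar_le_one hx a a]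
  have hrow_b : ∑ j, (P - pStar x b j) ≤ ((n : ℝ) - 1) * (P - α) + 1 := by
    rw [sum_sub_distrib, hfit.sum_univ_pStar, sum_const, card_univ, Fintype.card_fin,
      nsmul_eq_mul]
    linarith [(hk b).1, pStar_nonneg hx b b]
  rw [card_univ, Fintype.card_fin] at hsplit
  have := mul_le_one_of_row_slack hα hη.le (by linarith) hαP hP hN.le (by
    calc ((n : ℝ) - 1 + 1) * ((1 - η - P) * (P - η)) = n * ((1 - η - P) * (P - η)) := by ring
      _ ≤ _ := hsplit
      _ ≤ _ := by gcongr <;> linarith)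
  linarith

lemma mul_mem_Icc_of_max_lt {K ρ : ℝ} (hx : ∀ i, 0 ≤ x i) (ha : ∀ j, x j ≤ x a)
    (hb : ∀ j, x b ≤ x j) (hK : 0 < K) (hab : x a * x b ∈ Set.Icc ρ⁻¹ ρ)
    (hspread : x a < K ^ 2 * x b) (i j : Fin n) :
    x i * x j ∈ Set.Icc (ρ * K ^ 2)⁻¹ (ρ * K ^ 2) := by
  refine ⟨?_, ?_⟩
  · calc (ρ * K ^ 2)⁻¹ = ρ⁻¹ / K ^ 2 := by rw [mul_inv, div_eq_mul_inv]
      _ ≤ x a * x b / K ^ 2 := by gcongr; exact hab.1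
      _ ≤ x b * x b := by
        rw [div_le_iff₀ (by positivity)]
        nlinarith [hx b]
      _ ≤ x i * x j := mul_le_mul (hb i) (hb j) (hx b) (hx i)
  · calc x i * x j ≤ x a * x a := mul_le_mul (ha i) (ha j) (hx j) (hx a)
      _ ≤ K ^ 2 * (x a * x b) := by nlinarith [hx a]
      _ ≤ ρ * K ^ 2 := by nlinarith [hab.2]

end Spread

lemma deltaTame_pStar_of_mul_mem_Icc {n : ℕ} {x : Fin n → ℝ} {M : ℝ} (hM : 0 < M)
    (h : ∀ i j, i ≠ j → x i * x j ∈ Set.Icc M⁻¹ M) : deltaTame (1 / (1 + M)) (pStar x) := by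
  intro i j hij
  obtain ⟨hlo, hhi⟩ := h i j hij
  have hxij : 0 < x i * x j := (inv_pos.2 hM).trans_le hlo
  rw [inv_le_iff_one_le_mul₀ hM] at hlo
  unfold pStar
  constructor
  · rw [div_le_div_iff₀ (by positivity) (by positivity)]
    nlinarith
  · rw [one_sub_div (by positivity), div_le_div_iff₀ (by positivity) (by positivity)]
    nlinarith

/-- For every `α ∈ (1/4, 1/2]` there exist `δ = δ(α) > 0` and
`n₀ = n₀(α)` such that for all `n ≥ n₀`, every graphical degree sequence with
`(n-1)α ≤ k_i ≤ (n-1)(1-α)` for all `i` is δ-tame. -/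
theorem tame_from_degree_bounds :
    ∀ α : ℝ, 1 / 4 < α → α ≤ 1 / 2 →
      ∃ δ : ℝ, 0 < δ ∧ ∃ n₀ : ℕ, ∀ n : ℕ, n₀ ≤ n →
        ∀ (k : Fin n → ℕ) (x : Fin n → ℝ),
          (∃ G : LabGraph n, degSeq G = k) →
          (∀ i, 0 < x i) → fitsDegrees x k →
          (∀ i, ((n : ℝ) - 1) * α ≤ (k i : ℝ) ∧ (k i : ℝ) ≤ ((n : ℝ) - 1) * (1 - α)) →
          deltaTame δ (pStar x) := by
  intro α hα hα2
  set η := (α - 1 / 4) / 2 with hη_def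
  set ρ := (1 - α) / α
  set K := ρ * ((1 - η) / η)
  have hη : 0 < η := half_pos (by linarith)
  have hρ : 0 < ρ := div_pos (by linarith) (by linarith)
  have hK : 0 < K := mul_pos hρ (div_pos (by linarith) hη)
  refine ⟨1 / (1 + ρ * K ^ 2), by positivity, ⌈2 / (α - 1 / 4)⌉₊ + 2, ?_⟩
  intro n hn k x _ hx hfit hk
  have hN : 1 < ((n : ℝ) - 1) * (α - 1 / 4 - η) := by
    have hceil := Nat.le_ceil (2 / (α - 1 / 4))
    have hn' : ((⌈2 / (α - 1 / 4)⌉₊ + 2 : ℕ) : ℝ) ≤ n := by exact_mod_cast hn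
    push_cast at hn'
    have h2 : 2 < ((n : ℝ) - 1) * (α - 1 / 4) := by
      rw [← div_lt_iff₀ (by linarith)]; linarith
    rw [hη_def]; linarith
  have : Nonempty (Fin n) := ⟨⟨0, by omega⟩⟩
  obtain ⟨a, ha⟩ := Finite.exists_max x
  obtain ⟨b, hb⟩ := Finite.exists_min x
  have hx₀ : ∀ i, 0 ≤ x i := fun i => (hx i).le
  have hab := mul_max_min_mem_Icc hfit hx₀ ha hb hk (by nlinarith) (by linarith)
  have hspread := max_lt_sq_mul_min hfit hx₀ ha hb hk hα2 hη (by linarith) hN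
  exact deltaTame_pStar_of_mul_mem_Icc (by positivity)
    fun i j _ => mul_mem_Icc_of_max_lt hx₀ ha hb hK hab hspread i j
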